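/- arXiv:math/9801134 — 2 statements merged into one kernel-verified Lean document; each statement's English description precedes it below -/
import Mathlib

section
/- In the flag space construction of the Verma quiver M_λ, the flag relations are consistent: the span of the relations Σ_{β: α_{k-1}→β→α_{k+1}} L_{α_0,...,α_{k-1},β,α_{k+1},...,α_n} (over all partial flags with a gap at position k) is preserved by the operator A_{β,α} sending L_{α_0,...,α_{n-1},α} to L_{α_0,...,α_{n-1},α,β}; hence A_{β,α} descends to a well-defined linear map on the quotient spaces (M_λ)_α → (M_λ)_β. -/
open Module LinearMap

/-- Abstract combinatorial datum of an arrangement of hyperplanes: the oriented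
graph `Γ_A` of strata, with arrows `α → β` corresponding to codimension-one
adjacency of closed strata. -/
structure ArrGraph where
  S : Type
  instFin : Fintype S
  instDecEq : DecidableEq S
  arrow : S → S → Prop
  instDecArrow : DecidableRel arrow
  codim : S → ℕ
  arrow_codim : ∀ {a b : S}, arrow a b → codim b = codim a + 1

attribute [instance] ArrGraph.instFin ArrGraph.instDecEq ArrGraph.instDecArrow

/-- A quiver of the arrangement: finite-dimensional complex vector spaces `V α`
attached to strata, and linear maps `A α β : V β → V α` vanishing unless `α, β`
are connected by an arrow, subject to `∑ β, A α β ∘ A β γ = 0` for `α ≠ γ`. -/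
structure ArrQuiver (G : ArrGraph) where
  V : G.S → Type
  instACG : ∀ a, AddCommGroup (V a)
  instMod : ∀ a, Module ℂ (V a)
  instFD : ∀ a, FiniteDimensional ℂ (V a)
  A : ∀ a b : G.S, V b →ₗ[ℂ] V a
  A_supp : ∀ a b : G.S, ¬ (G.arrow a b ∨ G.arrow b a) → A a b = 0
  rel : ∀ a c : G.S, a ≠ c → ∑ b : G.S, (A a b) ∘ₗ (A b c) = 0

attribute [instance] ArrQuiver.instACG ArrQuiver.instMod ArrQuiver.instFD

/-- The sign `(-1)^((codim α + codim β - 1)/2)` from the duality of quivers. -/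
noncomputable def sgn (G : ArrGraph) (a b : G.S) : ℂ :=
  (-1 : ℂ) ^ ((G.codim a + G.codim b - 1) / 2)

/-- The structure maps of the dual quiver:
`A^t α β = (-1)^((codim α + codim β - 1)/2) (A β α)^*`. -/
noncomputable def dualA (G : ArrGraph) (Q : ArrQuiver G) (a b : G.S) :
    Dual ℂ (Q.V b) →ₗ[ℂ] Dual ℂ (Q.V a) :=
  sgn G a b • (Q.A b a).dualMap

/-- A complete flag of strata ending at `g`: a chain
`∅ = α_0 → α_1 → ⋯ → α_n = g` in `Γ_A` with `codim α_j = j`, where `e` is the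
open stratum. -/
def FlagChain (G : ArrGraph) (e g : G.S) : Type :=
  {ch : Fin (G.codim g + 1) → G.S //
    ch 0 = e ∧ (∀ j : Fin (G.codim g), G.arrow (ch j.castSucc) (ch j.succ)) ∧
      ch (Fin.last (G.codim g)) = g}

instance (G : ArrGraph) (e g : G.S) : Fintype (FlagChain G e g) :=
  Subtype.fintype _

instance (G : ArrGraph) (e g : G.S) : DecidableEq (FlagChain G e g) :=
  Subtype.instDecidableEq

/-- The vector space freely spanned by complete flags ending at `g`. -/
abbrev FlagSpace (G : ArrGraph) (e g : G.S) : Type := FlagChain G e g →₀ ℂ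

/-- The gap-filling relation attached to a flag `F` and a position `0 < k < n`:
the sum of all flags agreeing with `F` away from position `k`. -/
noncomputable def relElem (G : ArrGraph) (e g : G.S) (F : FlagChain G e g)
    (k : ℕ) : FlagSpace G e g :=
  ∑ F' ∈ Finset.univ.filter
      (fun F' : FlagChain G e g => ∀ j : Fin (G.codim g + 1), (j : ℕ) ≠ k → F'.1 j = F.1 j),
    Finsupp.single F' 1

/-- The submodule of gap-filling relations. -/
noncomputable def RelMod (G : ArrGraph) (e g : G.S) : Submodule ℂ (FlagSpace G e g) :=
  Submodule.span ℂ
    {x | ∃ (F : FlagChain G e g) (k : ℕ), 0 < k ∧ k < G.codim g ∧ x = relElem G e g F k}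

/-- The space `(M_λ)_g` of the Verma quiver: flags modulo the gap-filling
relations. -/
abbrev MSpace (G : ArrGraph) (e g : G.S) : Type :=
  FlagSpace G e g ⧸ RelMod G e g

/-- Extension of a flag ending at `a` by a stratum `b` with `α → β`. -/
def extendFlag (G : ArrGraph) (e : G.S) {a b : G.S} (h : G.arrow a b)
    (F : FlagChain G e a) : FlagChain G e b := by
  have hcb : G.codim b = G.codim a + 1 := G.arrow_codim h
  refine ⟨fun j => if hj : (j : ℕ) < G.codim a + 1 then F.1 ⟨j, hj⟩ else b, ?_, ?_, ?_⟩
  · have h0 : (0 : ℕ) < G.codim a + 1 := by omega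
    simpa [h0] using F.2.1
  · intro j
    have hj1 : ((j.castSucc : Fin (G.codim b + 1)) : ℕ) = (j : ℕ) := rfl
    have hj2 : ((j.succ : Fin (G.codim b + 1)) : ℕ) = (j : ℕ) + 1 := rfl
    have hjlt : (j : ℕ) < G.codim b := j.isLt
    by_cases hc : (j : ℕ) + 1 < G.codim a + 1
    · have hc' : (j : ℕ) < G.codim a + 1 := by omega
      simp only [hj1, hj2, dif_pos hc, dif_pos hc']
      have := F.2.2.1 ⟨(j : ℕ), by omega⟩
      simpa [Fin.castSucc, Fin.succ] using this
    · have hj : (j : ℕ) = G.codim a := by omega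
      have hc' : (j : ℕ) < G.codim a + 1 := by omega
      simp only [hj1, hj2, dif_neg hc, dif_pos hc']
      have hlast : (⟨(j : ℕ), hc'⟩ : Fin (G.codim a + 1)) = Fin.last (G.codim a) := by
        ext; simpa using hj
      rw [hlast, F.2.2.2]
      exact h
  · have hlt : ¬ ((Fin.last (G.codim b) : ℕ) < G.codim a + 1) := by
      simp [Fin.last, hcb]
    exact dif_neg hlt

/-- The flag-extension operator `A_{β,α} : (flags to α) → (flags to β)`. -/
noncomputable def upMap (G : ArrGraph) (e : G.S) {a b : G.S} (h : G.arrow a b) :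
    FlagSpace G e a →ₗ[ℂ] FlagSpace G e b :=
  Finsupp.lmapDomain ℂ ℂ (extendFlag G e h)

lemma extendFlag_val (G : ArrGraph) (e : G.S) {a b : G.S} (h : G.arrow a b)
    (F : FlagChain G e a) (j : Fin (G.codim b + 1)) :
    (extendFlag G e h F).1 j =
      if hj : (j : ℕ) < G.codim a + 1 then F.1 ⟨j, hj⟩ else b := rfl

lemma extendFlag_injective (G : ArrGraph) (e : G.S) {a b : G.S} (h : G.arrow a b) :
    Function.Injective (extendFlag G e h) := by
  intro F F' hFF'
  have hcb : G.codim b = G.codim a + 1 := G.arrow_codim h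
  apply Subtype.ext
  funext j
  have hj : (j : ℕ) < G.codim a + 1 := j.isLt
  have := congrFun (congrArg Subtype.val hFF') ⟨(j : ℕ), by omega⟩
  simpa [extendFlag_val, hj] using this

lemma upMap_relElem (G : ArrGraph) (e : G.S) {a b : G.S} (h : G.arrow a b)
    (F : FlagChain G e a) (k : ℕ) (hk0 : 0 < k) (hk : k < G.codim a) :
    upMap G e h (relElem G e a F k) = relElem G e b (extendFlag G e h F) k := by
  have hcb : G.codim b = G.codim a + 1 := G.arrow_codim h
  unfold relElem upMap
  rw [Finsupp.lmapDomain_apply, Finsupp.mapDomain_finset_sum]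
  simp only [Finsupp.mapDomain_single]
  refine Finset.sum_bij (fun F' _ => extendFlag G e h F') ?_ ?_ ?_ ?_
  · intro F' hF'
    rw [Finset.mem_filter] at hF' ⊢
    refine ⟨Finset.mem_univ _, fun j hj => ?_⟩
    rw [extendFlag_val, extendFlag_val]
    by_cases hjlt : (j : ℕ) < G.codim a + 1
    · rw [dif_pos hjlt, dif_pos hjlt]
      exact hF'.2 ⟨(j : ℕ), hjlt⟩ hj
    · rw [dif_neg hjlt, dif_neg hjlt]
  · intro F₁ _ F₂ _ hEq
    exact extendFlag_injective G e h hEq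
  · intro F'' hF''
    rw [Finset.mem_filter] at hF''
    -- restrict F'' to the first codim a + 1 entries
    have hres : ∀ (j : ℕ) (hjlt : j < G.codim a + 1), j ≠ k →
        F''.1 ⟨j, by omega⟩ = F.1 ⟨j, by omega⟩ := by
      intro j hjlt hjk
      have := hF''.2 ⟨j, by omega⟩ hjk
      rw [extendFlag_val] at this
      simpa [hjlt] using this
    refine ⟨⟨fun j => F''.1 ⟨(j : ℕ), by omega⟩, ?_, ?_, ?_⟩, ?_, ?_⟩
    · have h0 : ((0 : Fin (G.codim b + 1)) : ℕ) = 0 := rfl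
      have := F''.2.1
      have : F''.1 ⟨0, by omega⟩ = e := by
        convert this using 2
        exact Fin.ext (by simp)
      simpa using this
    · intro j
      have hjlt : (j : ℕ) < G.codim a := j.isLt
      have := F''.2.2.1 ⟨(j : ℕ), by omega⟩
      convert this using 2 <;> rfl
    · have hlast : F''.1 ⟨G.codim a, by omega⟩ = F.1 ⟨G.codim a, by omega⟩ :=
        hres (G.codim a) (by omega) (by omega)
      have hF : F.1 ⟨G.codim a, by omega⟩ = a := by
        have := F.2.2.2
        convert this using 2
        exact Fin.ext rfl
      simp only [Fin.last]
      rw [hlast, hF]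
    · refine Finset.mem_filter.mpr ?_
      refine ⟨Finset.mem_univ _, fun j hj => ?_⟩
      exact hres (j : ℕ) j.isLt hj
    · apply Subtype.ext
      funext j
      refine (extendFlag_val G e h _ j).trans ?_
      by_cases hjlt : (j : ℕ) < G.codim a + 1
      · rw [dif_pos hjlt]
      · rw [dif_neg hjlt]
        have hj : (j : ℕ) = G.codim b := by omega
        have : j = Fin.last (G.codim b) := Fin.ext (by simpa [Fin.last] using hj)
        rw [this, F''.2.2.2]
  · intro F' _
    rfl

lemma upMap_maps_rel (G : ArrGraph) (e : G.S) {a b : G.S} (h : G.arrow a b) :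
    (RelMod G e a).map (upMap G e h) ≤ RelMod G e b := by
  rw [RelMod, Submodule.map_span, Submodule.span_le]
  rintro x ⟨y, ⟨F, k, hk0, hk, rfl⟩, rfl⟩
  have hcb : G.codim b = G.codim a + 1 := G.arrow_codim h
  rw [SetLike.mem_coe, RelMod]
  exact Submodule.subset_span
    ⟨extendFlag G e h F, k, hk0, by omega, (upMap_relElem G e h F k hk0 hk)⟩

/-- In the flag construction of the Verma quiver `M_λ`, the
gap-filling relations are consistent with flag extension: for an arrow `α → β`,
the extension operator `A_{β,α}` maps the span of the relations for flags ending
at `α` into the span of the relations for flags ending at `β`, and hence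
descends to a well-defined linear map `(M_λ)_α → (M_λ)_β` on the quotients. -/
theorem flag_relations_preserved (G : ArrGraph) (e : G.S) {a b : G.S}
    (h : G.arrow a b) :
    (RelMod G e a).map (upMap G e h) ≤ RelMod G e b ∧
    ∃ T : MSpace G e a →ₗ[ℂ] MSpace G e b,
      T ∘ₗ (RelMod G e a).mkQ = (RelMod G e b).mkQ ∘ₗ upMap G e h := by
  refine ⟨upMap_maps_rel G e h, ?_⟩
  have hker : RelMod G e a ≤ LinearMap.ker ((RelMod G e b).mkQ ∘ₗ upMap G e h) := by
    intro x hx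
    rw [LinearMap.mem_ker, LinearMap.comp_apply, Submodule.mkQ_apply,
      Submodule.Quotient.mk_eq_zero]
    exact upMap_maps_rel G e h ⟨x, hx, rfl⟩
  exact ⟨(RelMod G e a).liftQ _ hker, (RelMod G e a).liftQ_mkQ _ hker⟩
end

section
/- The specialization functor Sp_α : Qui(A) → Qui(T_{cl(X_α)} A) is exact and commutes with the duality involution: Sp_α(V^t) is naturally isomorphic to (Sp_α V)^t for every quiver V. -/
open Module LinearMap

/-- The fiber of the regrouping map `p` (sending a stratum `β` of `A` to the
corresponding stratum `(β', β'')` of the normal-cone arrangement) over a stratum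
of the normal-cone arrangement. -/
def pFiber {G G2 : ArrGraph} (p : G.S → G2.S) (s : G2.S) : Type :=
  {b : G.S // p b = s}

instance {G G2 : ArrGraph} (p : G.S → G2.S) (s : G2.S) : Fintype (pFiber p s) :=
  Subtype.fintype _

/-- The spaces of the specialized quiver `Sp_α V`:
`V_{(β',β'')} = ⊕_{β : p β = (β',β'')} V_β`. -/
abbrev SpV {G G2 : ArrGraph} (p : G.S → G2.S)
    (V : G.S → Type) [∀ a, AddCommGroup (V a)] [∀ a, Module ℂ (V a)]
    (s : G2.S) : Type :=
  (c : pFiber p s) → V c.1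

/-- The structure maps of the specialized quiver: the direct sums of the
corresponding maps of the original quiver. -/
noncomputable def SpA {G G2 : ArrGraph} (p : G.S → G2.S)
    (V : G.S → Type) [∀ a, AddCommGroup (V a)] [∀ a, Module ℂ (V a)]
    (B : ∀ a b : G.S, V b →ₗ[ℂ] V a)
    (s t : G2.S) : SpV p V t →ₗ[ℂ] SpV p V s :=
  LinearMap.pi (fun c : pFiber p s =>
    ∑ b : pFiber p t, (B c.1 b.1) ∘ₗ (LinearMap.proj b))

/-- The map induced on specialized quivers by a morphism of quivers. -/
noncomputable def SpHom {G G2 : ArrGraph} (p : G.S → G2.S)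
    (V W : G.S → Type) [∀ a, AddCommGroup (V a)] [∀ a, Module ℂ (V a)]
    [∀ a, AddCommGroup (W a)] [∀ a, Module ℂ (W a)]
    (f : ∀ a : G.S, V a →ₗ[ℂ] W a) (s : G2.S) : SpV p V s →ₗ[ℂ] SpV p W s :=
  LinearMap.pi (fun c : pFiber p s => (f c.1) ∘ₗ (LinearMap.proj c))

/-! On each stratum of the normal-cone arrangement, `Sp_α` is a finite product of the
original spaces, with block matrices of the original maps as structure maps. Exactness is
therefore checked componentwise, and `(⊕ V_β)^* ≅ ⊕ V_β^*` turns the transpose of a block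
matrix into the block matrix of transposes; since `p` preserves codimension, the duality
sign is constant on each block. -/

theorem Function.Exact.piMap {ι : Type*} {α β γ : ι → Type*} [∀ i, Zero (γ i)]
    {f : ∀ i, α i → β i} {g : ∀ i, β i → γ i} (h : ∀ i, Function.Exact (f i) (g i)) :
    Function.Exact (Pi.map f) (Pi.map g) := fun y => by
  rw [funext_iff, Set.range_piMap, Set.mem_univ_pi]
  exact forall_congr' fun i => h i (y i)

instance {G G2 : ArrGraph} (p : G.S → G2.S) (s : G2.S) : DecidableEq (pFiber p s) :=
  inferInstanceAs (DecidableEq {b : G.S // p b = s})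

section Specialization

variable {G G2 : ArrGraph} (p : G.S → G2.S)

section Exactness

variable {U V W : G.S → Type} [∀ a, AddCommGroup (U a)] [∀ a, Module ℂ (U a)]
  [∀ a, AddCommGroup (V a)] [∀ a, Module ℂ (V a)]
  [∀ a, AddCommGroup (W a)] [∀ a, Module ℂ (W a)]
  {f : ∀ a, U a →ₗ[ℂ] V a} {g : ∀ a, V a →ₗ[ℂ] W a}

theorem SpHom_injective (hf : ∀ a, Function.Injective (f a)) (s : G2.S) :
    Function.Injective (SpHom p U V f s) :=
  Function.Injective.piMap fun c => hf c.1

theorem SpHom_surjective (hg : ∀ a, Function.Surjective (g a)) (s : G2.S) :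
    Function.Surjective (SpHom p V W g s) :=
  Function.Surjective.piMap fun c => hg c.1

theorem SpHom_exact (h : ∀ a, Function.Exact (f a) (g a)) (s : G2.S) :
    Function.Exact (SpHom p U V f s) (SpHom p V W g s) :=
  Function.Exact.piMap fun c => h c.1

end Exactness

section Duality

variable {V : G.S → Type} [∀ a, AddCommGroup (V a)] [∀ a, Module ℂ (V a)]

theorem SpA_apply (B : ∀ a b : G.S, V b →ₗ[ℂ] V a) (s t : G2.S) (x : SpV p V t)
    (c : pFiber p s) : SpA p V B s t x c = ∑ b : pFiber p t, B c.1 b.1 (x b) := by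
  simp [SpA, LinearMap.pi_apply, LinearMap.sum_apply]

theorem SpA_eq_smul_of_fiberwise {B B' : ∀ a b : G.S, V b →ₗ[ℂ] V a} (k : G2.S → G2.S → ℂ)
    (h : ∀ a b, B' a b = k (p a) (p b) • B a b) (s t : G2.S) :
    SpA p V B' s t = k s t • SpA p V B s t := by
  refine LinearMap.ext fun x => funext fun c => ?_
  simp only [LinearMap.smul_apply, Pi.smul_apply, SpA_apply, Finset.smul_sum, h, c.2]
  exact Finset.sum_congr rfl fun b _ => by rw [b.2]

/-- The transpose of a block matrix is the block matrix of the transposed blocks,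
read through `(⊕ V_β)^* ≅ ⊕ V_β^*`. -/
theorem lsum_comp_SpA_dualMap (B : ∀ a b : G.S, V b →ₗ[ℂ] V a) (s t : G2.S) :
    (LinearMap.lsum ℂ (fun c : pFiber p s => V c.1) ℂ).toLinearMap ∘ₗ
        SpA p (fun a => Dual ℂ (V a)) (fun a b => (B b a).dualMap) s t
      = (SpA p V B t s).dualMap ∘ₗ
        (LinearMap.lsum ℂ (fun c : pFiber p t => V c.1) ℂ).toLinearMap := by
  ext φ x
  simp only [LinearMap.coe_comp, Function.comp_apply, LinearEquiv.coe_coe,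
    LinearMap.lsum_apply, LinearMap.coe_sum, Finset.sum_apply, LinearMap.proj_apply,
    LinearMap.dualMap_apply, SpA_apply, map_sum]
  exact Finset.sum_comm

end Duality

theorem sgn_eq_sgn_of_codim (hcodim : ∀ b : G.S, G2.codim (p b) = G.codim b) (a b : G.S) :
    sgn G a b = sgn G2 (p a) (p b) := by
  simp only [sgn, hcodim]

end Specialization

theorem specialization_exact_and_commutes_with_duality_general (G G2 : ArrGraph)
    (p : G.S → G2.S)
    (hcodim : ∀ b : G.S, G2.codim (p b) = G.codim b) :
    (∀ (Q' Q Q'' : ArrQuiver G)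
      (f : ∀ a : G.S, Q'.V a →ₗ[ℂ] Q.V a) (g : ∀ a : G.S, Q.V a →ₗ[ℂ] Q''.V a),
      (∀ a b : G.S, f a ∘ₗ Q'.A a b = Q.A a b ∘ₗ f b) →
      (∀ a b : G.S, g a ∘ₗ Q.A a b = Q''.A a b ∘ₗ g b) →
      (∀ a : G.S, Function.Injective (f a)) →
      (∀ a : G.S, Function.Surjective (g a)) →
      (∀ a : G.S, LinearMap.range (f a) = LinearMap.ker (g a)) →
      (∀ s : G2.S, Function.Injective (SpHom p Q'.V Q.V f s) ∧
        Function.Surjective (SpHom p Q.V Q''.V g s) ∧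
        LinearMap.range (SpHom p Q'.V Q.V f s)
          = LinearMap.ker (SpHom p Q.V Q''.V g s))) ∧
    (∀ Q : ArrQuiver G,
      ∃ e : ∀ s : G2.S,
        SpV p (fun a => Dual ℂ (Q.V a)) s ≃ₗ[ℂ] Dual ℂ (SpV p Q.V s),
      ∀ s t : G2.S,
        (e s).toLinearMap ∘ₗ SpA p (fun a => Dual ℂ (Q.V a)) (dualA G Q) s t
          = (sgn G2 s t • (SpA p Q.V Q.A t s).dualMap) ∘ₗ (e t).toLinearMap) := by
  refine ⟨fun Q' Q Q'' f g _ _ finj gsurj hrk s => ?_, fun Q => ?_⟩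
  · have hexact : ∀ a, Function.Exact (f a) (g a) := fun a =>
      LinearMap.exact_iff.mpr (hrk a).symm
    exact ⟨SpHom_injective p finj s, SpHom_surjective p gsurj s,
      (LinearMap.exact_iff.mp (SpHom_exact p hexact s)).symm⟩
  · refine ⟨fun s => LinearMap.lsum ℂ (fun c : pFiber p s => Q.V c.1) ℂ, fun s t => ?_⟩
    have hdual : SpA p (fun a => Dual ℂ (Q.V a)) (dualA G Q) s t
        = sgn G2 s t • SpA p (fun a => Dual ℂ (Q.V a)) (fun a b => (Q.A b a).dualMap) s t :=
      SpA_eq_smul_of_fiberwise p (sgn G2)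
        (fun a b => by rw [dualA, sgn_eq_sgn_of_codim p hcodim]) s t
    rw [hdual, LinearMap.comp_smul, lsum_comp_SpA_dualMap, LinearMap.smul_comp]

/-- The specialization functor `Sp_α : Qui(A) → Qui(T_{cl(X_α)} A)`
is exact and commutes with the duality involution: it takes short exact sequences
of quivers to short exact sequences, and `Sp_α (V^t)` is naturally isomorphic to
`(Sp_α V)^t` (via the canonical isomorphism `⊕ V_β^* ≅ (⊕ V_β)^*`, compatible
with all structure maps; here `p` preserves codimension, so the duality signs
agree). -/
theorem specialization_exact_and_commutes_with_duality (G G2 : ArrGraph)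
    (p : G.S → G2.S)
    (harrow : ∀ a b : G.S, G.arrow a b → G2.arrow (p a) (p b))
    (hcodim : ∀ b : G.S, G2.codim (p b) = G.codim b) :
    (∀ (Q' Q Q'' : ArrQuiver G)
      (f : ∀ a : G.S, Q'.V a →ₗ[ℂ] Q.V a) (g : ∀ a : G.S, Q.V a →ₗ[ℂ] Q''.V a),
      (∀ a b : G.S, f a ∘ₗ Q'.A a b = Q.A a b ∘ₗ f b) →
      (∀ a b : G.S, g a ∘ₗ Q.A a b = Q''.A a b ∘ₗ g b) →
      (∀ a : G.S, Function.Injective (f a)) →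
      (∀ a : G.S, Function.Surjective (g a)) →
      (∀ a : G.S, LinearMap.range (f a) = LinearMap.ker (g a)) →
      (∀ s : G2.S, Function.Injective (SpHom p Q'.V Q.V f s) ∧
        Function.Surjective (SpHom p Q.V Q''.V g s) ∧
        LinearMap.range (SpHom p Q'.V Q.V f s)
          = LinearMap.ker (SpHom p Q.V Q''.V g s))) ∧
    (∀ Q : ArrQuiver G,
      ∃ e : ∀ s : G2.S,
        SpV p (fun a => Dual ℂ (Q.V a)) s ≃ₗ[ℂ] Dual ℂ (SpV p Q.V s),
      ∀ s t : G2.S,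
        (e s).toLinearMap ∘ₗ SpA p (fun a => Dual ℂ (Q.V a)) (dualA G Q) s t
          = (sgn G2 s t • (SpA p Q.V Q.A t s).dualMap) ∘ₗ (e t).toLinearMap) :=
  specialization_exact_and_commutes_with_duality_general G G2 p hcodim
end
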